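/- Let l be a natural number, a > 0 a real number, and x₁ ∈ ℝ. Set z = x₁ + a·i ∈ ℂ. Then the l-th derivative at x₁ of the function ℝ → ℝ, x ↦ (x² + a²)^{−2}, equals (as a complex number, under the embedding ℝ ↪ ℂ) Σ_{k=0}^{l} (−1)^{l}·l!·(l−k+1)·(k+1)·z^{−(l−k+2)}·z̄^{−(k+2)}. -/

import Mathlib

/-!
Over `ℂ`, `(x² + a²)⁻² = (x - a i)⁻² (x + a i)⁻²`, and `(x + c)⁻²` has `k`-th derivative
`(-1)^k (k+1)! (x + c)^{-(k+2)}` whenever `c ∉ ℝ`. The Leibniz rule then gives the sum, since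
`C(l, k) (k+1)! (l-k+1)! = l! (k+1) (l-k+1)`.
-/

open Complex Finset

theorem Nat.choose_mul_factorial_succ_mul_factorial_succ {l k : ℕ} (hk : k ≤ l) :
    l.choose k * (k + 1).factorial * (l - k + 1).factorial =
      l.factorial * (l - k + 1) * (k + 1) := by
  rw [Nat.factorial_succ, Nat.factorial_succ, ← Nat.choose_mul_factorial_mul_factorial hk]
  ring

theorem prod_range_neg_two_sub {R : Type*} [CommRing R] (k : ℕ) :
    ∏ i ∈ range k, ((-2 : R) - i) = (-1) ^ k * (k + 1).factorial := by
  induction k with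
  | zero => simp
  | succ k ih =>
    rw [prod_range_succ, ih, Nat.factorial_succ (k + 1)]
    push_cast
    ring

-- No differentiability hypothesis: as `re ∘ ofReal = id`, `f` and `ofReal ∘ f` are
-- differentiable at the same points.
theorem deriv_ofReal_comp (f : ℝ → ℝ) (x : ℝ) :
    deriv (fun y => (f y : ℂ)) x = deriv f x := by
  by_cases hf : DifferentiableAt ℝ f x
  · exact hf.hasDerivAt.ofReal_comp.deriv
  · have hf' : ¬ DifferentiableAt ℝ (fun y => (f y : ℂ)) x := fun h =>
      hf (by simpa [Function.comp_def] using reCLM.differentiableAt.comp x h)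
    rw [deriv_zero_of_not_differentiableAt hf, deriv_zero_of_not_differentiableAt hf', ofReal_zero]

theorem iteratedDeriv_ofReal_comp (f : ℝ → ℝ) (n : ℕ) :
    iteratedDeriv n (fun y => (f y : ℂ)) = fun x : ℝ => ((iteratedDeriv n f x : ℝ) : ℂ) := by
  induction n with
  | zero => simp only [iteratedDeriv_zero]
  | succ n ih =>
    funext x
    rw [iteratedDeriv_succ, iteratedDeriv_succ, ih, deriv_ofReal_comp]

theorem ofReal_add_ne_zero {c : ℂ} (hc : c.im ≠ 0) (x : ℝ) : (x : ℂ) + c ≠ 0 := fun h =>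
  hc (by simpa using congrArg im h)

theorem contDiffAt_ofReal_add_zpow {c : ℂ} (hc : c.im ≠ 0) (m : ℤ) (n : WithTop ℕ∞) (x : ℝ) :
    ContDiffAt ℝ n (fun y : ℝ => ((y : ℂ) + c) ^ m) x :=
  ((ofRealCLM.analyticAt x).add analyticAt_const).zpow (ofReal_add_ne_zero hc x) |>.contDiffAt

theorem iteratedDeriv_ofReal_add_zpow {c : ℂ} (hc : c.im ≠ 0) (m : ℤ) (k : ℕ) :
    iteratedDeriv k (fun y : ℝ => ((y : ℂ) + c) ^ m) =
      fun x : ℝ => (∏ i ∈ range k, ((m : ℂ) - i)) * ((x : ℂ) + c) ^ (m - k) := by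
  induction k with
  | zero => simp
  | succ k ih =>
    funext x
    have hzpow : HasDerivAt (fun y : ℝ => ((y : ℂ) + c) ^ (m - k))
        (((m - k : ℤ) : ℂ) * ((x : ℂ) + c) ^ (m - k - 1)) x := by
      simpa using ((hasDerivAt_zpow (m - k) _ (.inl (ofReal_add_ne_zero hc x))).comp (x : ℂ)
        ((hasDerivAt_id (x : ℂ)).add_const c)).comp_ofReal
    rw [iteratedDeriv_succ, ih, (hzpow.const_mul _).deriv, prod_range_succ, Nat.cast_succ,
      ← sub_sub]
    push_cast
    ring

theorem iteratedDeriv_ofReal_add_zpow_neg_two {c : ℂ} (hc : c.im ≠ 0) (k : ℕ) (x : ℝ) :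
    iteratedDeriv k (fun y : ℝ => ((y : ℂ) + c) ^ (-2 : ℤ)) x =
      (-1) ^ k * (k + 1).factorial * ((x : ℂ) + c) ^ (-((k : ℤ) + 2)) := by
  rw [iteratedDeriv_ofReal_add_zpow hc, Int.cast_neg, Int.cast_ofNat, prod_range_neg_two_sub]
  ring_nf

theorem iteratedDeriv_ofReal_add_zpow_neg_two_mul {c d : ℂ} (hc : c.im ≠ 0) (hd : d.im ≠ 0)
    (l : ℕ) (x : ℝ) :
    iteratedDeriv l (fun y : ℝ => ((y : ℂ) + d) ^ (-2 : ℤ) * ((y : ℂ) + c) ^ (-2 : ℤ)) x =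
      ∑ k ∈ range (l + 1), (-1 : ℂ) ^ l * (l.factorial : ℂ) * ((l - k + 1 : ℕ) : ℂ) * ((k : ℂ) + 1)
        * ((x : ℂ) + c) ^ (-((l : ℤ) - (k : ℤ) + 2)) * ((x : ℂ) + d) ^ (-((k : ℤ) + 2)) := by
  rw [iteratedDeriv_fun_mul (contDiffAt_ofReal_add_zpow hd _ _ x)
    (contDiffAt_ofReal_add_zpow hc _ _ x)]
  refine sum_congr rfl fun k hk => ?_
  have hkl : k ≤ l := Nat.lt_succ_iff.mp (mem_range.mp hk)
  have hcoeff : (l.choose k : ℂ) * (k + 1).factorial * (l - k + 1).factorial =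
      l.factorial * (l - k + 1 : ℕ) * (k + 1) := by
    exact_mod_cast Nat.choose_mul_factorial_succ_mul_factorial_succ hkl
  have hsign : (-1 : ℂ) ^ k * (-1) ^ (l - k) = (-1) ^ l := by
    rw [← pow_add, Nat.add_sub_cancel' hkl]
  rw [iteratedDeriv_ofReal_add_zpow_neg_two hd, iteratedDeriv_ofReal_add_zpow_neg_two hc,
    Nat.cast_sub hkl]
  linear_combination ((x : ℂ) + c) ^ (-((l : ℤ) - (k : ℤ) + 2)) * ((x : ℂ) + d) ^ (-((k : ℤ) + 2))
    * ((-1 : ℂ) ^ k * (-1) ^ (l - k) * hcoeff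
      + (l.factorial : ℂ) * ((l - k + 1 : ℕ) : ℂ) * ((k : ℂ) + 1) * hsign)

theorem iteratedDeriv_inv_sq_norm (l : ℕ) (a : ℝ) (ha : 0 < a) (x₁ : ℝ) :
    ((iteratedDeriv l (fun x : ℝ => ((x ^ 2 + a ^ 2) ^ 2)⁻¹) x₁ : ℝ) : ℂ) =
      ∑ k ∈ Finset.range (l + 1),
        (-1 : ℂ) ^ l * (l.factorial : ℂ) * ((l - k + 1 : ℕ) : ℂ) * ((k : ℂ) + 1)
          * ((x₁ : ℂ) + (a : ℂ) * Complex.I) ^ (-((l : ℤ) - (k : ℤ) + 2))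
          * (starRingEnd ℂ ((x₁ : ℂ) + (a : ℂ) * Complex.I)) ^ (-((k : ℤ) + 2)) := by
  have him : ((a : ℂ) * I).im ≠ 0 := by simpa using ha.ne'
  have hfactor : (fun x : ℝ => ((((x ^ 2 + a ^ 2) ^ 2)⁻¹ : ℝ) : ℂ)) =
      fun x : ℝ => ((x : ℂ) + starRingEnd ℂ ((a : ℂ) * I)) ^ (-2 : ℤ)
        * ((x : ℂ) + a * I) ^ (-2 : ℤ) := by
    funext x
    rw [← mul_zpow, map_mul, conj_ofReal, conj_I, zpow_neg, zpow_ofNat]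
    push_cast
    congr 2
    linear_combination (a : ℂ) ^ 2 * I_sq
  rw [← congrFun (iteratedDeriv_ofReal_comp _ l) x₁, hfactor,
    iteratedDeriv_ofReal_add_zpow_neg_two_mul him (by simpa using him), map_add, conj_ofReal]
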